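/- Let y₁ = e₁, y₂ = (1/2)e₁ − (1/2)e₂, y₃ = (1/2)e₁ + (1/2)e₂, y₁* = e₁*, y₂* = e₁* − e₂*, y₃* = e₁* + e₂* in ℓ₁² × ℓ_∞². Then ‖y_j‖₁ = ‖y_j*‖_∞ = y_j*(y_j) = 1 for all j, the frame operator of (y_j, y_j*) is not a scalar multiple of the identity, and Σ_{j,k=1}^3 |y_j*(y_k)|² = 11/2, which is strictly less than the corresponding quantity 45/8 for the FUNTF x₁ = e₁, x₂ = (1/4)e₁ − (3/4)e₂, x₃ = (1/4)e₁ + (3/4)e₂ with the same functionals. -/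

import Mathlib

open scoped BigOperators

/-- `ℓ₁²`: `ℝ²` with the `ℓ₁` norm. -/
noncomputable abbrev L1two := PiLp 1 (fun _ : Fin 2 => ℝ)
/-- `ℓ_∞²`: `ℝ²` with the sup norm (the dual of `ℓ₁²`). -/
noncomputable abbrev Linftwo := PiLp ⊤ (fun _ : Fin 2 => ℝ)

/-- The duality pairing between `ℓ_∞²` and `ℓ₁²`. -/
noncomputable def pair2 (f : Linftwo) (v : L1two) : ℝ :=
  ∑ i, (WithLp.equiv ⊤ (Fin 2 → ℝ) f) i * (WithLp.equiv 1 (Fin 2 → ℝ) v) i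

noncomputable def yv : Fin 3 → L1two := fun j =>
  (WithLp.equiv 1 (Fin 2 → ℝ)).symm
    (![![1, 0], ![1/2, -(1/2)], ![1/2, 1/2]] j)

noncomputable def xv : Fin 3 → L1two := fun j =>
  (WithLp.equiv 1 (Fin 2 → ℝ)).symm
    (![![1, 0], ![1/4, -(3/4)], ![1/4, 3/4]] j)

noncomputable def xf : Fin 3 → Linftwo := fun j =>
  (WithLp.equiv ⊤ (Fin 2 → ℝ)).symm
    (![![1, 0], ![1, -1], ![1, 1]] j)

lemma sup_two (g : Fin 2 → ℝ) : ⨆ i, g i = max (g 0) (g 1) := by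
  apply le_antisymm
  · exact ciSup_le (Fin.forall_fin_two.mpr ⟨le_max_left _ _, le_max_right _ _⟩)
  · exact max_le (le_ciSup (Set.Finite.bddAbove (Set.finite_range g)) 0)
      (le_ciSup (Set.Finite.bddAbove (Set.finite_range g)) 1)

/-- The naive frame potential `∑ |x_j^*(x_k)|²` does not characterize FUNTFs:
the system `(y_j, x_j^*)` is unit norm but not a FUNTF, yet has strictly smaller
naive potential than the FUNTF `(x_j, x_j^*)`. -/
theorem naive_frame_potential_fails :
    (∀ j, ‖yv j‖ = 1) ∧ (∀ j, ‖xf j‖ = 1) ∧ (∀ j, pair2 (xf j) (yv j) = 1) ∧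
    (¬ ∃ c : ℝ, ∀ v : L1two, ∑ j, pair2 (xf j) v • yv j = c • v) ∧
    (∑ j, ∑ k, (pair2 (xf j) (yv k)) ^ 2 = 11/2) ∧
    (∑ j, ∑ k, (pair2 (xf j) (xv k)) ^ 2 = 45/8) ∧
    (11/2 : ℝ) < 45/8 := by
  refine ⟨?_, ?_, ?_, ?_, ?_, ?_, by norm_num⟩
  · intro j
    rw [PiLp.norm_eq_sum (by norm_num)]
    fin_cases j <;> norm_num [yv, Fin.sum_univ_two, abs_of_pos, abs_of_nonneg]
  · intro j
    rw [PiLp.norm_eq_ciSup, sup_two]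
    fin_cases j <;> norm_num [xf]
  · intro j
    fin_cases j <;> norm_num [pair2, yv, xf, Fin.sum_univ_two]
  · rintro ⟨c, hc⟩
    have h1 := congrArg (fun w : L1two => w 0) (hc (yv 0))
    have h2 := congrArg (fun w : L1two => w 1) (hc ((WithLp.equiv 1 (Fin 2 → ℝ)).symm ![0,1]))
    simp [pair2, yv, xf, Fin.sum_univ_two, Fin.sum_univ_three, Matrix.cons_val_zero, Matrix.cons_val_one, Matrix.head_cons, Matrix.vecHead, Matrix.vecTail] at h1 h2
    linarith
  · norm_num [pair2, yv, xf, Fin.sum_univ_two, Fin.sum_univ_three, Matrix.cons_val_zero, Matrix.cons_val_one, Matrix.cons_val_two, Matrix.head_cons, Matrix.vecHead, Matrix.vecTail]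
  · norm_num [pair2, xv, xf, Fin.sum_univ_two, Fin.sum_univ_three, Matrix.cons_val_zero, Matrix.cons_val_one, Matrix.cons_val_two, Matrix.head_cons, Matrix.vecHead, Matrix.vecTail]
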